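/- arXiv:2008.05177 — 3 statements merged into one kernel-verified Lean document; each statement's English description precedes it below -/
import Mathlib

section
/- With w_1,...,w_M ~ Dirichlet(1,...,1) and W̃ sampled (conditionally on the w_i) with probability π_i = φ w_i + (1-φ)/M of taking value w_i, the unconditional expectation satisfies E[M·W̃ - 1] = φ(M-1)/(M+1). -/
/-!
Pull the uniform measure back to the corner simplex `{x ∈ ℝⁿ | x ≥ 0, ∑ x ≤ 1}`, `n = M - 1`.
Fubini along one coordinate gives `∫ (1 - ∑ x)ᵏ = k! / (n + k)!` by induction on `n`, and one
more Fubini step plus permutation symmetry gives `∫ xᵢ² = 2 / (n + 2)!`; hence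
`E[∑ wᵢ²] = 2 / (M + 1)`. Since `∑ wᵢ = 1`, the conditional mean of `M W̃ - 1` given `w` is
`φ M ∑ wᵢ² - φ`, whose expectation is `φ (M - 1) / (M + 1)`.
-/

open MeasureTheory
open scoped ENNReal

/-- The Dirichlet(1,...,1) distribution on `Fin M → ℝ`, i.e. the uniform probability
distribution on the standard `(M-1)`-dimensional simplex, obtained as the pushforward of the
normalized Lebesgue measure on `{x : Fin (M-1) → ℝ | x ≥ 0, ∑ x ≤ 1}` under the map
appending the last coordinate `1 - ∑ x`. -/
noncomputable def stdSimplexUniform (M : ℕ) : Measure (Fin M → ℝ) :=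
  Measure.map
    (fun (x : Fin (M - 1) → ℝ) (i : Fin M) =>
      if h : (i : ℕ) < M - 1 then x ⟨i, h⟩ else 1 - ∑ j, x j)
    ((Nat.factorial (M - 1) : ℝ≥0∞) •
      volume.restrict {x : Fin (M - 1) → ℝ | (∀ i, 0 ≤ x i) ∧ ∑ i, x i ≤ 1})

open Set

def cornerSimplex (n : ℕ) : Set (Fin n → ℝ) := {x | (∀ i, 0 ≤ x i) ∧ ∑ i, x i ≤ 1}

section cornerSimplex

open scoped Nat

variable {n : ℕ}

lemma cornerSimplex_subset_Icc : cornerSimplex n ⊆ Icc 0 1 :=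
  fun _ ⟨hx0, hx1⟩ => ⟨hx0, fun i => (Finset.single_le_sum (fun j _ => hx0 j)
    (Finset.mem_univ i)).trans hx1⟩

lemma isClosed_cornerSimplex : IsClosed (cornerSimplex n) :=
  show IsClosed (Ici 0 ∩ {x : Fin n → ℝ | ∑ i, x i ≤ 1}) from
    isClosed_Ici.inter (isClosed_le (by fun_prop) continuous_const)

lemma isCompact_cornerSimplex : IsCompact (cornerSimplex n) :=
  isCompact_Icc.of_isClosed_subset isClosed_cornerSimplex cornerSimplex_subset_Icc

lemma measurableSet_cornerSimplex : MeasurableSet (cornerSimplex n) :=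
  isClosed_cornerSimplex.measurableSet

lemma integrableOn_cornerSimplex {f : (Fin n → ℝ) → ℝ} (hf : Continuous f) :
    IntegrableOn f (cornerSimplex n) :=
  hf.continuousOn.integrableOn_compact isCompact_cornerSimplex

lemma cons_mem_cornerSimplex_iff {t : ℝ} {y : Fin n → ℝ} :
    Fin.cons t y ∈ cornerSimplex (n + 1) ↔ y ∈ cornerSimplex n ∧ t ∈ Icc 0 (1 - ∑ i, y i) := by
  simp only [cornerSimplex, mem_ofPred_eq, Fin.forall_fin_succ, Fin.cons_zero, Fin.cons_succ,
    Fin.sum_cons, mem_Icc]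
  constructor
  · rintro ⟨⟨ht, hy⟩, hs⟩
    exact ⟨⟨hy, by linarith⟩, ht, by linarith⟩
  · rintro ⟨⟨hy, -⟩, ht, hs⟩
    exact ⟨⟨ht, hy⟩, by linarith⟩

lemma setIntegral_cornerSimplex_succ (f : ℝ → ℝ → ℝ) (hf : Continuous (Function.uncurry f)) :
    ∫ x in cornerSimplex (n + 1), f (x 0) (1 - ∑ i, x i) =
      ∫ y in cornerSimplex n, ∫ t in (0 : ℝ)..(1 - ∑ i, y i), f t (1 - ∑ i, y i - t) := by
  set F := (cornerSimplex (n + 1)).indicator fun x : Fin (n + 1) → ℝ => f (x 0) (1 - ∑ i, x i)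
  have hmp := (volume_preserving_piFinSuccAbove (fun _ : Fin (n + 1) => ℝ) 0).symm
  have hsymm : ∀ p : ℝ × (Fin n → ℝ),
      (MeasurableEquiv.piFinSuccAbove (fun _ => ℝ) 0).symm p = Fin.cons p.1 p.2 :=
    fun p => Fin.insertNth_zero' p.1 p.2
  have hF : ∀ (t : ℝ) (y : Fin n → ℝ), F (Fin.cons t y) = (cornerSimplex n).indicator
      (fun y => (Icc 0 (1 - ∑ i, y i)).indicator (fun t => f t (1 - ∑ i, y i - t)) t) y := by
    intro t y
    by_cases hy : y ∈ cornerSimplex n <;> by_cases ht : t ∈ Icc 0 (1 - ∑ i, y i) <;>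
      simp [F, indicator, cons_mem_cornerSimplex_iff, hy, ht, Fin.sum_cons, sub_sub, add_comm]
  have hint : Integrable (fun p : ℝ × (Fin n → ℝ) => F (Fin.cons p.1 p.2))
      (volume.prod volume) := by
    have hF_int : Integrable F :=
      (integrable_indicator_iff measurableSet_cornerSimplex).2 <| integrableOn_cornerSimplex <|
        hf.comp (f := fun x : Fin (n + 1) → ℝ => (x 0, 1 - ∑ i, x i)) (by fun_prop)
    have := (hmp.integrable_comp_emb (MeasurableEquiv.measurableEmbedding _)).2 hF_int
    simp only [Function.comp_def, hsymm] at this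
    exact this
  calc ∫ x in cornerSimplex (n + 1), f (x 0) (1 - ∑ i, x i)
      = ∫ p : ℝ × (Fin n → ℝ), F (Fin.cons p.1 p.2) := by
        rw [← integral_indicator measurableSet_cornerSimplex, ← hmp.integral_comp']
        simp only [hsymm, F]
    _ = ∫ y, ∫ t, F (Fin.cons t y) := integral_prod_symm _ hint
    _ = _ := by
        simp_rw [hF]
        rw [← integral_indicator measurableSet_cornerSimplex]
        refine integral_congr_ae (Filter.Eventually.of_forall fun y => ?_)
        by_cases hy : y ∈ cornerSimplex n
        · have hc : 0 ≤ 1 - ∑ i, y i := sub_nonneg.2 hy.2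
          simp only [indicator_of_mem hy]
          rw [integral_indicator measurableSet_Icc, integral_Icc_eq_integral_Ioc,
            intervalIntegral.integral_of_le hc]
        · simp [indicator_of_notMem hy]

lemma setIntegral_cornerSimplex_one_sub_sum_pow (n k : ℕ) :
    ∫ x in cornerSimplex n, (1 - ∑ i, x i) ^ k = k ! / (n + k)! := by
  induction n generalizing k with
  | zero =>
    have : cornerSimplex 0 = univ := by ext x; simp [cornerSimplex]
    simp [this, measureReal_def, volume_pi, Nat.factorial_ne_zero]
  | succ n ih =>
    calc ∫ x in cornerSimplex (n + 1), (1 - ∑ i, x i) ^ k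
        = ∫ y in cornerSimplex n, ∫ t in (0 : ℝ)..(1 - ∑ i, y i), (1 - ∑ i, y i - t) ^ k :=
          setIntegral_cornerSimplex_succ (fun _ s => s ^ k) (by fun_prop)
      _ = ∫ y in cornerSimplex n, (1 - ∑ i, y i) ^ (k + 1) / (k + 1) := by
          congr 1 with y
          simp [intervalIntegral.integral_comp_sub_left (fun t => t ^ k)]
      _ = k ! / (n + 1 + k)! := by
          rw [integral_div, ih, show n + (k + 1) = n + 1 + k by ring, Nat.factorial_succ]
          push_cast
          field_simp

lemma volume_cornerSimplex (n : ℕ) : volume (cornerSimplex n) = (n ! : ℝ≥0∞)⁻¹ := by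
  have h := setIntegral_cornerSimplex_one_sub_sum_pow n 0
  simp only [pow_zero, setIntegral_const, smul_eq_mul, mul_one, Nat.factorial_zero, Nat.cast_one,
    add_zero, measureReal_def] at h
  rw [← ENNReal.ofReal_toReal isCompact_cornerSimplex.measure_lt_top.ne, h, one_div,
    ENNReal.ofReal_inv_of_pos (by positivity), ENNReal.ofReal_natCast]

lemma setIntegral_cornerSimplex_sq_zero (n : ℕ) :
    ∫ x in cornerSimplex (n + 1), x 0 ^ 2 = 2 / (n + 3)! := by
  calc ∫ x in cornerSimplex (n + 1), x 0 ^ 2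
      = ∫ y in cornerSimplex n, ∫ t in (0 : ℝ)..(1 - ∑ i, y i), t ^ 2 :=
        setIntegral_cornerSimplex_succ (fun t _ => t ^ 2) (by fun_prop)
    _ = ∫ y in cornerSimplex n, (1 - ∑ i, y i) ^ 3 / 3 := by norm_num [integral_pow]
    _ = 2 / (n + 3)! := by
        rw [integral_div, setIntegral_cornerSimplex_one_sub_sum_pow]
        norm_num [Nat.factorial]
        ring

lemma setIntegral_cornerSimplex_comp_perm (σ : Equiv.Perm (Fin n)) (g : (Fin n → ℝ) → ℝ) :
    ∫ x in cornerSimplex n, g (x ∘ σ) = ∫ x in cornerSimplex n, g x := by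
  set e := MeasurableEquiv.piCongrLeft (fun _ : Fin n => ℝ) σ.symm
  have he : ∀ x, e x = x ∘ σ := fun x => by
    funext j
    rw [MeasurableEquiv.coe_piCongrLeft, Equiv.piCongrLeft_apply_eq_cast]
    simp
  have hpre : e ⁻¹' cornerSimplex n = cornerSimplex n := by
    ext x
    simp only [mem_preimage, he, cornerSimplex, mem_ofPred_eq, Function.comp_apply,
      Equiv.sum_comp σ x, σ.forall_congr_right (q := fun i => 0 ≤ x i)]
  have hmp : MeasurePreserving e := volume_measurePreserving_piCongrLeft _ _
  have := hmp.setIntegral_preimage_emb e.measurableEmbedding g (cornerSimplex n)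
  simpa only [hpre, he] using this

lemma setIntegral_cornerSimplex_sq (i : Fin n) :
    ∫ x in cornerSimplex n, x i ^ 2 = 2 / (n + 2)! := by
  cases n with
  | zero => exact i.elim0
  | succ n =>
    rw [← setIntegral_cornerSimplex_sq_zero n]
    simpa using setIntegral_cornerSimplex_comp_perm (Equiv.swap 0 i) (fun x => x 0 ^ 2)

end cornerSimplex

def snocOneSubSum {n : ℕ} (x : Fin n → ℝ) : Fin (n + 1) → ℝ := Fin.snoc x (1 - ∑ i, x i)

section snocOneSubSum

variable {n : ℕ}

lemma sum_snocOneSubSum (x : Fin n → ℝ) : ∑ i, snocOneSubSum x i = 1 := by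
  simp [snocOneSubSum, Fin.sum_univ_castSucc]

lemma sum_sq_snocOneSubSum (x : Fin n → ℝ) :
    ∑ i, snocOneSubSum x i ^ 2 = ∑ i, x i ^ 2 + (1 - ∑ i, x i) ^ 2 := by
  simp [snocOneSubSum, Fin.sum_univ_castSucc]

lemma continuous_snocOneSubSum : Continuous (snocOneSubSum (n := n)) := by
  unfold snocOneSubSum
  fun_prop

lemma measurableEmbedding_snocOneSubSum : MeasurableEmbedding (snocOneSubSum (n := n)) := by
  have hinv : Function.LeftInverse (Fin.init (α := fun _ => ℝ)) (snocOneSubSum (n := n)) :=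
    fun x => Fin.init_snoc (α := fun _ => ℝ) _ x
  exact (hinv.isClosedEmbedding (by fun_prop) continuous_snocOneSubSum).measurableEmbedding

end snocOneSubSum

section stdSimplexUniform

open scoped Nat

lemma stdSimplexUniform_succ (n : ℕ) :
    stdSimplexUniform (n + 1) =
      (n ! : ℝ≥0∞) • (volume.restrict (cornerSimplex n)).map snocOneSubSum := by
  rw [stdSimplexUniform, Measure.map_smul]
  rfl

lemma integral_stdSimplexUniform_succ (n : ℕ) (f : (Fin (n + 1) → ℝ) → ℝ) :
    ∫ w, f w ∂stdSimplexUniform (n + 1) = n ! * ∫ x in cornerSimplex n, f (snocOneSubSum x) := by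
  rw [stdSimplexUniform_succ, integral_smul_measure,
    measurableEmbedding_snocOneSubSum.integral_map]
  simp

instance isProbabilityMeasure_stdSimplexUniform_succ (n : ℕ) :
    IsProbabilityMeasure (stdSimplexUniform (n + 1)) where
  measure_univ := by
    rw [stdSimplexUniform_succ, Measure.smul_apply, measurableEmbedding_snocOneSubSum.map_apply,
      preimage_univ, Measure.restrict_apply_univ, volume_cornerSimplex, smul_eq_mul,
      ENNReal.mul_inv_cancel (by positivity) (ENNReal.natCast_ne_top _)]

lemma ae_sum_eq_one_stdSimplexUniform (n : ℕ) :
    ∀ᵐ w ∂stdSimplexUniform (n + 1), ∑ i, w i = 1 := by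
  rw [stdSimplexUniform_succ]
  refine Measure.ae_smul_measure ?_ _
  rw [measurableEmbedding_snocOneSubSum.ae_map_iff]
  exact Filter.Eventually.of_forall sum_snocOneSubSum

lemma integrable_sum_sq_stdSimplexUniform (n : ℕ) :
    Integrable (fun w => ∑ i, w i ^ 2) (stdSimplexUniform (n + 1)) := by
  rw [stdSimplexUniform_succ]
  refine Integrable.smul_measure ?_ (ENNReal.natCast_ne_top _)
  rw [measurableEmbedding_snocOneSubSum.integrable_map_iff]
  exact integrableOn_cornerSimplex ((by fun_prop : Continuous fun w : Fin (n + 1) → ℝ =>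
    ∑ i, w i ^ 2).comp continuous_snocOneSubSum)

lemma integral_sum_sq_stdSimplexUniform (n : ℕ) :
    ∫ w, ∑ i, w i ^ 2 ∂stdSimplexUniform (n + 1) = 2 / (n + 2) := by
  rw [integral_stdSimplexUniform_succ]
  simp_rw [sum_sq_snocOneSubSum]
  rw [integral_add (integrableOn_cornerSimplex (by fun_prop))
      (integrableOn_cornerSimplex (by fun_prop)),
    integral_finsetSum _ fun i _ => integrableOn_cornerSimplex (by fun_prop)]
  simp_rw [setIntegral_cornerSimplex_sq, setIntegral_cornerSimplex_one_sub_sum_pow]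
  simp [Nat.factorial_succ]
  field_simp
  ring

end stdSimplexUniform

lemma sum_mixture_mul_card_mul_sub_one {ι : Type*} [Fintype ι] [Nonempty ι] (φ : ℝ)
    {w : ι → ℝ} (hw : ∑ i, w i = 1) :
    ∑ i, (φ * w i + (1 - φ) / Fintype.card ι) * (Fintype.card ι * w i - 1) =
      φ * Fintype.card ι * ∑ i, w i ^ 2 - φ := by
  have hM : (Fintype.card ι : ℝ) ≠ 0 := by positivity
  have hterm : ∀ i, (φ * w i + (1 - φ) / Fintype.card ι) * (Fintype.card ι * w i - 1) =
      φ * Fintype.card ι * w i ^ 2 + (1 - 2 * φ) * w i - (1 - φ) / Fintype.card ι := by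
    intro i
    field_simp
    ring
  simp_rw [hterm, Finset.sum_sub_distrib, Finset.sum_add_distrib, ← Finset.mul_sum, hw,
    Finset.sum_const, Finset.card_univ, nsmul_eq_mul]
  field_simp
  ring

theorem google_estimator_unconditional_mean_general (M : ℕ) (hM : 2 ≤ M) (φ : ℝ) :
    ∫ w, (∑ i, (φ * w i + (1 - φ) / M) * ((M : ℝ) * w i - 1)) ∂(stdSimplexUniform M)
      = φ * ((M : ℝ) - 1) / ((M : ℝ) + 1) := by
  obtain ⟨n, rfl⟩ : ∃ n, M = n + 1 := ⟨M - 1, by omega⟩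
  have hintegrand : (fun w : Fin (n + 1) → ℝ =>
      ∑ i, (φ * w i + (1 - φ) / (n + 1 : ℕ)) * (((n + 1 : ℕ) : ℝ) * w i - 1))
      =ᵐ[stdSimplexUniform (n + 1)] fun w => φ * (n + 1 : ℕ) * ∑ i, w i ^ 2 - φ := by
    filter_upwards [ae_sum_eq_one_stdSimplexUniform n] with w hw
    simpa using sum_mixture_mul_card_mul_sub_one φ hw
  rw [integral_congr_ae hintegrand,
    integral_sub ((integrable_sum_sq_stdSimplexUniform n).const_mul _) (integrable_const φ),
    integral_const_mul, integral_sum_sq_stdSimplexUniform, integral_const, probReal_univ]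
  push_cast
  field_simp
  ring

/-- With `(w_1,...,w_M) ~ Dirichlet(1,...,1)` and `W̃` sampled (conditionally on the `w_i`)
taking value `w_i` with probability `φ w_i + (1-φ)/M`, the unconditional expectation of
Google's estimator `U = M W̃ - 1` equals `φ (M-1)/(M+1)`. -/
theorem google_estimator_unconditional_mean (M : ℕ) (hM : 2 ≤ M) (φ : ℝ)
    (hφ : φ ∈ Set.Icc (0 : ℝ) 1) :
    ∫ w, (∑ i, (φ * w i + (1 - φ) / M) * ((M : ℝ) * w i - 1)) ∂(stdSimplexUniform M)
      = φ * ((M : ℝ) - 1) / ((M : ℝ) + 1) :=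
  google_estimator_unconditional_mean_general M hM φ
end

section
/- ∫_0^∞ log(z) e^{-z} dz = -γ, where γ is the Euler–Mascheroni constant. -/
/-- `∫_0^∞ log(z) e^{-z} dz = -γ`, where `γ` is the Euler–Mascheroni constant. -/
theorem integral_log_exp :
    ∫ z in Set.Ioi (0 : ℝ), Real.log z * Real.exp (-z)
      = -Real.eulerMascheroniConstant := by
  set I : ℝ := ∫ z in Set.Ioi (0 : ℝ), Real.log z * Real.exp (-z) with hI
  have h1 : HasDerivAt Complex.GammaIntegral (I : ℂ) 1 := by
    have := Complex.hasDerivAt_GammaIntegral (s := 1) (by norm_num)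
    convert this using 1
    have : (∫ t : ℝ in Set.Ioi 0, (t : ℂ) ^ ((1 : ℂ) - 1) * (↑(Real.log t) * ↑(Real.exp (-t))))
        = ∫ t : ℝ in Set.Ioi 0, ((Real.log t * Real.exp (-t) : ℝ) : ℂ) := by
      refine MeasureTheory.setIntegral_congr_fun measurableSet_Ioi fun t ht => ?_
      simp
    rw [this, hI]
    exact integral_ofReal.symm
  have h2 : HasDerivAt Complex.Gamma (I : ℂ) 1 := by
    refine h1.congr_of_eventuallyEq ?_
    have : {s : ℂ | 0 < s.re} ∈ nhds (1 : ℂ) := by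
      refine IsOpen.mem_nhds ?_ (by norm_num)
      exact isOpen_lt continuous_const Complex.continuous_re
    filter_upwards [this] with s hs
    exact Complex.Gamma_eq_integral hs
  have h3 := Complex.hasDerivAt_Gamma_one
  have := h2.unique h3
  exact_mod_cast this
end

section
/- For φ ∈ [0,1], ∫_0^∞ (log(z) - φ + γ)² [φ(z-1) + 1] e^{-z} dz = π²/6 - φ². -/
/-!
Write `Γ⁽ᵏ⁾` for the `k`-th derivative of `Γ`. Differentiating the Mellin transform
`Γ(s) = ∫₀^∞ t^(s-1) e^(-t) dt` under the integral sign gives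
`∫₀^∞ tⁿ (log t)ᵏ e^(-t) dt = Γ⁽ᵏ⁾(n + 1)`, so after expanding the square the integral is a linear
combination of `Γ⁽ᵏ⁾(1)` and `Γ⁽ᵏ⁾(2)` for `k ≤ 2`. Here `Γ'(1) = -γ`, and
`Γ''(1) = γ² + π²/6` comes from the reflection formula: `Γ(1 + s) Γ(1 - s) sin(πs) = πs` near `0`,
and comparing third derivatives at `0` gives `2 Γ''(1) - 2 γ² = π²/3`. The values at `2` follow
by differentiating `Γ(s + 1) = s Γ(s)`.
-/

open Set Filter Asymptotics Real MeasureTheory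
open scoped Topology

theorem Asymptotics.IsBigO.ofReal_left {α : Type*} {l : Filter α} {f g : α → ℝ}
    (h : f =O[l] g) : (fun x => (f x : ℂ)) =O[l] g :=
  isBigO_norm_left.mp (by simpa only [Complex.norm_real] using h.norm_left)

theorem isBigO_atTop_log_pow_mul_exp_neg (k : ℕ) (a : ℝ) :
    (fun t : ℝ => log t ^ k * exp (-t)) =O[atTop] (· ^ (-a)) := by
  induction k generalizing a with
  | zero => simpa using (isLittleO_exp_neg_mul_rpow_atTop zero_lt_one (-a)).isBigO
  | succ k ih =>
    simpa only [pow_succ', mul_assoc, smul_eq_mul] using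
      isBigO_rpow_top_log_smul (lt_add_one a) (ih (a + 1))

theorem isBigO_nhdsGT_zero_log_pow_mul_exp_neg (k : ℕ) {b : ℝ} (hb : 0 < b) :
    (fun t : ℝ => log t ^ k * exp (-t)) =O[𝓝[>] 0] (· ^ (-b)) := by
  induction k generalizing b with
  | zero =>
    refine IsBigO.of_bound 1 ?_
    filter_upwards [Ioo_mem_nhdsGT zero_lt_one] with t ⟨ht0, ht1⟩
    rw [pow_zero, one_mul, norm_of_nonneg (exp_pos _).le, one_mul,
      norm_of_nonneg (rpow_pos_of_pos ht0 _).le]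
    exact (exp_le_one_iff.mpr (neg_nonpos.mpr ht0.le)).trans
      (one_le_rpow_of_pos_of_le_one_of_nonpos ht0 ht1.le (neg_nonpos.mpr hb.le))
  | succ k ih =>
    simpa only [pow_succ', mul_assoc, smul_eq_mul] using
      isBigO_rpow_zero_log_smul (half_lt_self hb) (ih (half_pos hb))

theorem locallyIntegrableOn_log_pow_mul_exp_neg (k : ℕ) :
    LocallyIntegrableOn (fun t : ℝ => ((log t ^ k * exp (-t) : ℝ) : ℂ)) (Ioi 0) := by
  refine ContinuousOn.locallyIntegrableOn ?_ measurableSet_Ioi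
  exact Complex.continuous_ofReal.comp_continuousOn
    (((continuousOn_log.mono fun t ht => ne_of_gt ht).pow k).mul (by fun_prop))

theorem mellinConvergent_log_pow_mul_exp_neg (k : ℕ) {s : ℂ} (hs : 0 < s.re) :
    MellinConvergent (fun t : ℝ => ((log t ^ k * exp (-t) : ℝ) : ℂ)) s :=
  mellinConvergent_of_isBigO_rpow (locallyIntegrableOn_log_pow_mul_exp_neg k)
    (isBigO_atTop_log_pow_mul_exp_neg k _).ofReal_left (lt_add_one s.re)
    (isBigO_nhdsGT_zero_log_pow_mul_exp_neg k (half_pos hs)).ofReal_left (half_lt_self hs)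

theorem hasDerivAt_mellin_log_pow_mul_exp_neg (k : ℕ) {s : ℂ} (hs : 0 < s.re) :
    HasDerivAt (mellin fun t : ℝ => ((log t ^ k * exp (-t) : ℝ) : ℂ))
      (mellin (fun t : ℝ => ((log t ^ (k + 1) * exp (-t) : ℝ) : ℂ)) s) s := by
  have h := (mellin_hasDerivAt_of_isBigO_rpow (locallyIntegrableOn_log_pow_mul_exp_neg k)
    (isBigO_atTop_log_pow_mul_exp_neg k _).ofReal_left (lt_add_one s.re)
    (isBigO_nhdsGT_zero_log_pow_mul_exp_neg k (half_pos hs)).ofReal_left (half_lt_self hs)).2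
  have hlog : (fun t : ℝ => log t • ((log t ^ k * exp (-t) : ℝ) : ℂ)) =
      fun t => ((log t ^ (k + 1) * exp (-t) : ℝ) : ℂ) := by
    ext t
    rw [Complex.real_smul, ← Complex.ofReal_mul, pow_succ', mul_assoc]
  rwa [hlog] at h

theorem Complex.iteratedDeriv_Gamma_eq_mellin (k : ℕ) {s : ℂ} (hs : 0 < s.re) :
    iteratedDeriv k Gamma s =
      mellin (fun t : ℝ => ((Real.log t ^ k * Real.exp (-t) : ℝ) : ℂ)) s := by
  induction k generalizing s with
  | zero => simp [Gamma_eq_integral hs, GammaIntegral_eq_mellin]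
  | succ k ih =>
    have heq : iteratedDeriv k Gamma =ᶠ[𝓝 s]
        mellin (fun t : ℝ => ((Real.log t ^ k * Real.exp (-t) : ℝ) : ℂ)) := by
      filter_upwards [(isOpen_lt continuous_const continuous_re).mem_nhds hs] with z hz
      exact ih hz
    rw [iteratedDeriv_succ, heq.deriv_eq, (hasDerivAt_mellin_log_pow_mul_exp_neg k hs).deriv]

theorem integral_pow_mul_log_pow_mul_exp_neg (n k : ℕ) :
    IntegrableOn (fun t : ℝ => t ^ n * log t ^ k * exp (-t)) (Ioi 0) ∧
      ∫ t in Ioi 0, t ^ n * log t ^ k * exp (-t) =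
        (iteratedDeriv k Complex.Gamma (n + 1)).re := by
  have hs : 0 < ((n : ℂ) + 1).re := by simp; positivity
  have hcast : (fun t : ℝ => (t : ℂ) ^ ((n : ℂ) + 1 - 1) • ((log t ^ k * exp (-t) : ℝ) : ℂ)) =
      fun t => ((t ^ n * log t ^ k * exp (-t) : ℝ) : ℂ) := by
    ext t
    rw [add_sub_cancel_right, Complex.cpow_natCast, smul_eq_mul]
    push_cast
    ring
  constructor
  · have h := mellinConvergent_log_pow_mul_exp_neg k hs
    rw [MellinConvergent, hcast] at h
    simpa only [IntegrableOn, RCLike.re_to_complex, Complex.ofReal_re] using h.re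
  · rw [Complex.iteratedDeriv_Gamma_eq_mellin k hs, mellin, hcast, integral_complex_ofReal,
      Complex.ofReal_re]

namespace Complex

theorem analyticAt_Gamma {s : ℂ} (hs : ∀ m : ℕ, s ≠ -m) : AnalyticAt ℂ Gamma s := by
  have h := (differentiable_one_div_Gamma.analyticAt s).inv (inv_ne_zero (Gamma_ne_zero hs))
  exact h.congr (.of_forall fun z => inv_inv (Gamma z))

theorem analyticAt_Gamma_one : AnalyticAt ℂ Gamma 1 :=
  analyticAt_Gamma (by norm_cast; simp)

theorem analyticAt_Gamma_one_add : AnalyticAt ℂ (fun s => Gamma (1 + s)) 0 :=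
  analyticAt_Gamma_one.comp_of_eq (by fun_prop) (add_zero 1)

theorem analyticAt_Gamma_one_sub : AnalyticAt ℂ (fun s => Gamma (1 - s)) 0 :=
  analyticAt_Gamma_one.comp_of_eq (by fun_prop) (sub_zero 1)

theorem iteratedDeriv_Gamma_add_one (k : ℕ) {s : ℂ} (hs : ∀ m : ℕ, s ≠ -m) :
    iteratedDeriv (k + 1) Gamma (s + 1) =
      s * iteratedDeriv (k + 1) Gamma s + (k + 1) * iteratedDeriv k Gamma s := by
  have hs0 : s ≠ 0 := by simpa using hs 0
  have hrec : (fun z => Gamma (z + 1)) =ᶠ[𝓝 s] id * Gamma := by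
    filter_upwards [isOpen_ne.mem_nhds hs0] with z hz using Gamma_add_one z hz
  rw [← congrFun (iteratedDeriv_comp_add_const (k + 1) Gamma 1) s, hrec.iteratedDeriv_eq,
    iteratedDeriv_mul contDiffAt_id (analyticAt_Gamma hs).contDiffAt,
    Finset.sum_range_succ', Finset.sum_range_succ', Finset.sum_eq_zero]
  · simp only [zero_add, Nat.choose_one_right, Nat.cast_add, Nat.cast_one, iteratedDeriv_id,
      one_ne_zero, ↓reduceIte, mul_one, add_tsub_cancel_right, Nat.choose_zero_right, one_mul,
      tsub_zero]
    ring
  · intro i _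
    simp [iteratedDeriv_id]

theorem Gamma_one_add_mul_Gamma_one_sub_mul_sin :
    (fun s => Gamma (1 + s) * Gamma (1 - s) * sin (π * s)) =ᶠ[𝓝 0] fun s => π * s := by
  filter_upwards [Metric.ball_mem_nhds (0 : ℂ) one_pos] with s hs
  rcases eq_or_ne s 0 with rfl | hs0
  · simp
  have hsin : sin (π * s) ≠ 0 := by
    rw [Ne, sin_eq_zero_iff]
    rintro ⟨k, hk⟩
    have hsk : s = k := mul_left_cancel₀ (ofReal_ne_zero.mpr pi_ne_zero) (by rw [hk]; ring)
    rw [Metric.mem_ball, dist_zero_right, hsk, norm_intCast] at hs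
    have hk0 : k = 0 := Int.abs_lt_one_iff.mp (by rw [← Int.cast_abs] at hs; exact_mod_cast hs)
    exact hs0 (by simp [hsk, hk0])
  rw [add_comm, Gamma_add_one s hs0, mul_assoc s, Gamma_mul_Gamma_one_sub, mul_assoc,
    div_mul_cancel₀ _ hsin, mul_comm]

theorem iteratedDeriv_two_Gamma_one_add_mul_Gamma_one_sub :
    iteratedDeriv 2 (fun s => Gamma (1 + s) * Gamma (1 - s)) 0 = π ^ 2 / 3 := by
  have hsin (j : ℕ) : iteratedDeriv j (fun s => sin (π * s)) 0 = π ^ j * iteratedDeriv j sin 0 := by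
    simp only [iteratedDeriv_comp_const_mul contDiff_sin, mul_zero]
  have h3 := Gamma_one_add_mul_Gamma_one_sub_mul_sin.iteratedDeriv_eq 3
  rw [← Pi.mul_def, iteratedDeriv_mul
    (analyticAt_Gamma_one_add.fun_mul analyticAt_Gamma_one_sub).contDiffAt (by fun_prop)] at h3
  have hsin2 : iteratedDeriv 2 sin 0 = 0 := by simp [iteratedDeriv_succ]
  have hsin3 : iteratedDeriv 3 sin 0 = -1 := by simp [iteratedDeriv_succ]
  have hlin : iteratedDeriv 3 (fun s => (π : ℂ) * s) 0 = 0 := by simp [iteratedDeriv_succ]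
  simp only [Nat.reduceAdd, hsin, Finset.sum_range_succ, Finset.range_one, Finset.sum_singleton,
    Nat.choose_zero_right, Nat.cast_one, iteratedDeriv_zero, add_zero, Gamma_one, sub_zero,
    mul_one, tsub_zero, hsin3, mul_neg, one_mul, Nat.choose_one_right, Nat.cast_ofNat,
    iteratedDeriv_one, Nat.add_one_sub_one, hsin2, mul_zero, Nat.choose_succ_self_right,
    Nat.reduceSub, pow_one, deriv_sin, cos_zero, Nat.choose_self, tsub_self, pow_zero, sin_zero,
    hlin] at h3
  refine mul_left_cancel₀ (mul_ne_zero three_ne_zero (ofReal_ne_zero.mpr pi_ne_zero)) ?_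
  linear_combination h3

theorem iteratedDeriv_two_Gamma_one :
    iteratedDeriv 2 Gamma 1 = (eulerMascheroniConstant : ℂ) ^ 2 + π ^ 2 / 6 := by
  have h2 := iteratedDeriv_two_Gamma_one_add_mul_Gamma_one_sub
  rw [← Pi.mul_def, iteratedDeriv_mul analyticAt_Gamma_one_add.contDiffAt
    analyticAt_Gamma_one_sub.contDiffAt] at h2
  simp only [Nat.reduceAdd, iteratedDeriv_comp_const_add, add_zero, iteratedDeriv_comp_const_sub,
    sub_zero, smul_eq_mul, Finset.sum_range_succ, Finset.range_one, Finset.sum_singleton,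
    Nat.choose_zero_right, Nat.cast_one, iteratedDeriv_zero, Gamma_one, mul_one, tsub_zero,
    even_two, Even.neg_pow, one_pow, one_mul, Nat.choose_succ_self_right, Nat.cast_ofNat,
    iteratedDeriv_one, hasDerivAt_Gamma_one.deriv, mul_neg, Nat.add_one_sub_one, pow_one, neg_mul,
    neg_neg, Nat.choose_self, tsub_self, pow_zero] at h2
  linear_combination h2 / 2

theorem iteratedDeriv_one_Gamma_two : iteratedDeriv 1 Gamma 2 = 1 - eulerMascheroniConstant := by
  have h := iteratedDeriv_Gamma_add_one 0 (s := 1) (by norm_cast; simp)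
  norm_num [hasDerivAt_Gamma_one.deriv] at h ⊢
  linear_combination h

theorem iteratedDeriv_two_Gamma_two :
    iteratedDeriv 2 Gamma 2 = (eulerMascheroniConstant : ℂ) ^ 2 - 2 * eulerMascheroniConstant +
      π ^ 2 / 6 := by
  have h := iteratedDeriv_Gamma_add_one 1 (s := 1) (by norm_cast; simp)
  norm_num [hasDerivAt_Gamma_one.deriv, iteratedDeriv_two_Gamma_one] at h
  linear_combination h

end Complex

theorem integral_sq_log_add_mul_pow_mul_exp_neg (n : ℕ) (c : ℝ) :
    IntegrableOn (fun t : ℝ => (log t + c) ^ 2 * t ^ n * exp (-t)) (Ioi 0) ∧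
      ∫ t in Ioi 0, (log t + c) ^ 2 * t ^ n * exp (-t) =
        (iteratedDeriv 2 Complex.Gamma (n + 1)).re +
          2 * c * (iteratedDeriv 1 Complex.Gamma (n + 1)).re +
          c ^ 2 * (Complex.Gamma (n + 1)).re := by
  obtain ⟨hi0, he0⟩ := integral_pow_mul_log_pow_mul_exp_neg n 0
  obtain ⟨hi1, he1⟩ := integral_pow_mul_log_pow_mul_exp_neg n 1
  obtain ⟨hi2, he2⟩ := integral_pow_mul_log_pow_mul_exp_neg n 2
  have hexpand : (fun t : ℝ => (log t + c) ^ 2 * t ^ n * exp (-t)) = fun t =>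
      t ^ n * log t ^ 2 * exp (-t) + 2 * c * (t ^ n * log t ^ 1 * exp (-t)) +
        c ^ 2 * (t ^ n * log t ^ 0 * exp (-t)) := by
    ext t
    ring
  rw [hexpand]
  have hi21 : IntegrableOn (fun t : ℝ => t ^ n * log t ^ 2 * exp (-t) +
      2 * c * (t ^ n * log t ^ 1 * exp (-t))) (Ioi 0) := Integrable.fun_add hi2 (hi1.const_mul _)
  refine ⟨Integrable.fun_add hi21 (hi0.const_mul _), ?_⟩
  rw [integral_add hi21 (hi0.const_mul _), integral_add hi2 (hi1.const_mul _),
    integral_const_mul, integral_const_mul, he0, he1, he2, iteratedDeriv_zero]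

theorem integral_log_estimator_variance_general (φ : ℝ) :
    ∫ z in Set.Ioi (0 : ℝ),
        (Real.log z - φ + Real.eulerMascheroniConstant) ^ 2 * (φ * (z - 1) + 1)
          * Real.exp (-z)
      = Real.pi ^ 2 / 6 - φ ^ 2 := by
  set γ := eulerMascheroniConstant
  obtain ⟨hi0, he0⟩ := integral_sq_log_add_mul_pow_mul_exp_neg 0 (γ - φ)
  obtain ⟨hi1, he1⟩ := integral_sq_log_add_mul_pow_mul_exp_neg 1 (γ - φ)
  calc ∫ z in Ioi 0, (log z - φ + γ) ^ 2 * (φ * (z - 1) + 1) * exp (-z)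
      = ∫ z in Ioi 0, φ * ((log z + (γ - φ)) ^ 2 * z ^ 1 * exp (-z)) +
          (1 - φ) * ((log z + (γ - φ)) ^ 2 * z ^ 0 * exp (-z)) :=
        setIntegral_congr_fun measurableSet_Ioi fun z _ => by ring
    _ = φ * (∫ z in Ioi 0, (log z + (γ - φ)) ^ 2 * z ^ 1 * exp (-z)) +
          (1 - φ) * ∫ z in Ioi 0, (log z + (γ - φ)) ^ 2 * z ^ 0 * exp (-z) := by
        rw [integral_add (hi1.const_mul φ) (hi0.const_mul _), integral_const_mul,
          integral_const_mul]
    _ = π ^ 2 / 6 - φ ^ 2 := by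
        rw [he0, he1]
        norm_num [Complex.iteratedDeriv_two_Gamma_one, Complex.iteratedDeriv_one_Gamma_two,
          Complex.iteratedDeriv_two_Gamma_two, Complex.hasDerivAt_Gamma_one.deriv]
        norm_cast
        ring

/-- For `φ ∈ [0,1]`, `∫_0^∞ (log(z) - φ + γ)² (φ(z-1) + 1) e^{-z} dz = π²/6 - φ²`,
where `γ` is the Euler–Mascheroni constant. -/
theorem integral_log_estimator_variance (φ : ℝ) (hφ : φ ∈ Set.Icc (0 : ℝ) 1) :
    ∫ z in Set.Ioi (0 : ℝ),
        (Real.log z - φ + Real.eulerMascheroniConstant) ^ 2 * (φ * (z - 1) + 1)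
          * Real.exp (-z)
      = Real.pi ^ 2 / 6 - φ ^ 2 :=
  integral_log_estimator_variance_general φ
end
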